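/- The class PCSF is closed under predicative function recursion: if h is in PCSF, then so is f defined by f(x,ȳ/ā) = h(x,ȳ/ā, f↾x), where f↾x = {⟨z, f(z,ȳ/ā)⟩ : z∈x} with Kuratowski pairs. Conversely, every PCSF function is generated from the PCSF⁻ functions and projections by safe composition and predicative function recursion (in place of predicative set recursion). -/

import Mathlib

open scoped Classical

noncomputable section

namespace PCSFPaper

/-! ## Basic ZF-set helpers -/

/-- Image `{f z : z ∈ x}` of a ZF-set under an arbitrary class function. -/
noncomputable def zImage (f : ZFSet → ZFSet) (x : ZFSet) : ZFSet :=
  @ZFSet.image f (Classical.allZFSetDefinable fun s => f (s 0)) x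

/-- Kuratowski ordered pair `⟨c,d⟩ = {{c},{c,d}}`. -/
def kpair (c d : ZFSet) : ZFSet := {{c}, {c, d}}

/-! ## Δ₀ formulas of the language of set theory -/

/-- Δ₀ (bounded) formulas in the first-order language of set theory,
with `k` free variables.  In the bounded quantifiers `ball i φ`/`bex i φ`
the newly bound variable (ranging over the elements of variable `i`)
becomes variable `0` of `φ`, the old variables being shifted up by one. -/
inductive D0 : ℕ → Type
  | mem {k : ℕ} (i j : Fin k) : D0 k
  | eq {k : ℕ} (i j : Fin k) : D0 k
  | not {k : ℕ} : D0 k → D0 k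
  | and {k : ℕ} : D0 k → D0 k → D0 k
  | or {k : ℕ} : D0 k → D0 k → D0 k
  | ball {k : ℕ} (i : Fin k) : D0 (k + 1) → D0 k
  | bex {k : ℕ} (i : Fin k) : D0 (k + 1) → D0 k

/-- Satisfaction of Δ₀ formulas in the universe of ZF-sets. -/
def D0.Sat : ∀ {k : ℕ}, D0 k → (Fin k → ZFSet) → Prop
  | _, .mem i j, v => v i ∈ v j
  | _, .eq i j, v => v i = v j
  | _, .not φ, v => ¬ φ.Sat v
  | _, .and φ ψ, v => φ.Sat v ∧ ψ.Sat v
  | _, .or φ ψ, v => φ.Sat v ∨ ψ.Sat v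
  | _, .ball i φ, v => ∀ z ∈ v i, φ.Sat (Fin.cons z v)
  | _, .bex i φ, v => ∃ z ∈ v i, φ.Sat (Fin.cons z v)

/-- A `k`-ary relation on sets is Δ₀ iff it is defined by some Δ₀ formula. -/
def IsDelta0 {k : ℕ} (R : (Fin k → ZFSet) → Prop) : Prop :=
  ∃ φ : D0 k, ∀ v, R v ↔ φ.Sat v

/-! ## The classes PCSF⁻ and PCSF -/

/-- The class `PCSF⁻` of predicatively computable set functions taking only
safe arguments: generated from projections, pairing, null, union and the
membership conditional, by composition and safe separation. -/
inductive PCSFminus : ∀ m : ℕ, ((Fin m → ZFSet) → ZFSet) → Prop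
  | proj {m : ℕ} (j : Fin m) : PCSFminus m fun a => a j
  | pair : PCSFminus 2 fun a => {a 0, a 1}
  | null : PCSFminus 0 fun _ => ∅
  | union : PCSFminus 1 fun a => ZFSet.sUnion (a 0)
  | cond : PCSFminus 4 fun a => if a 2 ∈ a 3 then a 0 else a 1
  | comp {m k : ℕ} (h : (Fin k → ZFSet) → ZFSet) (t : Fin k → (Fin m → ZFSet) → ZFSet) :
      PCSFminus k h → (∀ i, PCSFminus m (t i)) →
      PCSFminus m fun a => h fun i => t i a
  | sep {m : ℕ} (h : (Fin (m + 1) → ZFSet) → ZFSet) :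
      PCSFminus (m + 1) h →
      PCSFminus (m + 1) fun a =>
        ZFSet.sep (fun b => h (Fin.snoc (Fin.init a) b) ≠ ∅) (a (Fin.last m))

/-- The class `PCSF` of predicatively computable set functions, with `n` normal
and `m` safe arguments: generated from `PCSF⁻` (whose arguments are all safe)
and projections by safe composition and predicative set recursion.  The
recursion rule is stated via its defining equation (which determines the
function uniquely, by ∈-induction); the recursion argument `x` is the first
normal argument, and the set `{f(z,ȳ/ā) : z ∈ x}` of previous values is passed
to `h` as a last, safe, argument. -/
inductive PCSF : ∀ n m : ℕ, ((Fin n → ZFSet) → (Fin m → ZFSet) → ZFSet) → Prop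
  | ofMinus {m : ℕ} (h : (Fin m → ZFSet) → ZFSet) :
      PCSFminus m h → PCSF 0 m fun _ a => h a
  | proj {n m : ℕ} (j : Fin (n + m)) : PCSF n m fun x a => Fin.append x a j
  | comp {n m k l : ℕ} (h : (Fin k → ZFSet) → (Fin l → ZFSet) → ZFSet)
      (r : Fin k → (Fin n → ZFSet) → (Fin 0 → ZFSet) → ZFSet)
      (t : Fin l → (Fin n → ZFSet) → (Fin m → ZFSet) → ZFSet) :
      PCSF k l h → (∀ i, PCSF n 0 (r i)) → (∀ i, PCSF n m (t i)) →
      PCSF n m fun x a => h (fun i => r i x Fin.elim0) fun i => t i x a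
  | recur {n m : ℕ} (h : (Fin (n + 1) → ZFSet) → (Fin (m + 1) → ZFSet) → ZFSet)
      (f : (Fin (n + 1) → ZFSet) → (Fin m → ZFSet) → ZFSet) :
      PCSF (n + 1) (m + 1) h →
      (∀ (x : ZFSet) (y : Fin n → ZFSet) (a : Fin m → ZFSet),
        f (Fin.cons x y) a =
          h (Fin.cons x y) (Fin.snoc a (zImage (fun z => f (Fin.cons z y) a) x))) →
      PCSF (n + 1) m f

/-- A relation is in `PCSF` iff its characteristic function
(`1 = {∅}` for true, `0 = ∅` for false) is in `PCSF`. -/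
def PCSFRel (n m : ℕ) (R : (Fin n → ZFSet) → (Fin m → ZFSet) → Prop) : Prop :=
  PCSF n m fun x a => if R x a then ({∅} : ZFSet) else ∅

/-! ## Transitive closure, hereditary finiteness -/

/-- Transitive closure `TC(x) = x ∪ ⋃{TC(y) : y ∈ x}` by ∈-recursion. -/
noncomputable def TCset : ZFSet → ZFSet :=
  ZFSet.mem_wf.fix fun x ih =>
    x ∪ ZFSet.sUnion (zImage (fun y => if h : y ∈ x then ih y h else ∅) x)

/-- A set is hereditarily finite iff its transitive closure is finite. -/
def IsHF (x : ZFSet) : Prop := (TCset x).toSet.Finite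

/-- `cT x` = cardinality of the transitive closure of `x`
(junk value `0` if infinite). -/
noncomputable def cT (x : ZFSet) : ℕ := (TCset x).toSet.ncard

/-- The finite union `A₁ ∪ ⋯ ∪ Aₘ`. -/
def unionFin {m : ℕ} (A : Fin m → ZFSet) : ZFSet :=
  (List.ofFn A).foldr (· ∪ ·) ∅

/-! ## The encoding ν of binary strings, application, product -/

/-- The von Neumann numeral 1 = {∅}. -/
def zOne : ZFSet := {∅}

/-- The von Neumann numeral 2 = {∅,{∅}}. -/
def zTwo : ZFSet := {∅, {∅}}

/-- The encoding of binary strings (head of the list = last appended bit):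
`ν(ε) = ∅` and `ν(s i) = ⟨i+1, ν s⟩`, a bit `i ∈ {0,1}` being represented
by the boolean `i = 1`. -/
def nu : List Bool → ZFSet
  | [] => ∅
  | b :: s => kpair (if b then zTwo else zOne) (nu s)

/-- `zApp b c = b'c = ⋃{d ∈ ⋃⋃b : ⟨c,d⟩ ∈ b}` (which is `⋃{d : ⟨c,d⟩ ∈ b}`,
since every such `d` belongs to `⋃⋃b`). -/
def zApp (b c : ZFSet) : ZFSet :=
  ZFSet.sUnion (ZFSet.sep (fun d => kpair c d ∈ b) (ZFSet.sUnion (ZFSet.sUnion b)))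

/-- Cartesian product `a × b = {⟨u,v⟩ : u ∈ a, v ∈ b}` (with Kuratowski pairs). -/
noncomputable def zProd (a b : ZFSet) : ZFSet :=
  ZFSet.sUnion (zImage (fun u => zImage (fun v => kpair u v) b) a)

/-! ## Polynomial time computability on binary strings -/

/-- The trivial encoding of binary strings over the alphabet `Bool`. -/
def boolListEncoding : Computability.Encoding (List Bool) Bool where
  encode := id
  decode := fun l => some l
  decode_encode := fun _ => rfl

/-- Encoding of a tuple of binary strings over the alphabet `Option Bool`:
the strings are listed in order, each terminated by the separator `none`. -/
def encTuple : (k : ℕ) → (Fin k → List Bool) → List (Option Bool)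
  | 0, _ => []
  | k + 1, v => (v 0).map some ++ none :: encTuple k (Fin.tail v)

/-- Splits off the first separator-terminated block. -/
def splitFirst : List (Option Bool) → List Bool × List (Option Bool)
  | [] => ([], [])
  | none :: l => ([], l)
  | some b :: l => ((splitFirst l).1.cons b, (splitFirst l).2)

theorem splitFirst_encode (s : List Bool) (rest : List (Option Bool)) :
    splitFirst (s.map some ++ none :: rest) = (s, rest) := by
  induction s with
  | nil => rfl
  | cons b s ih => simp [splitFirst, ih]

/-- Decoding of tuples of binary strings. -/
def decTuple : (k : ℕ) → List (Option Bool) → Option (Fin k → List Bool)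
  | 0, _ => some Fin.elim0
  | k + 1, l =>
    (decTuple k (splitFirst l).2).map fun v => Fin.cons (splitFirst l).1 v

theorem decTuple_encTuple : ∀ (k : ℕ) (v : Fin k → List Bool),
    decTuple k (encTuple k v) = some v := by
  intro k
  induction k with
  | zero =>
    intro v
    simp only [decTuple]
    congr
    exact funext fun i => i.elim0
  | succ k ih =>
    intro v
    simp [decTuple, encTuple, splitFirst_encode, ih (Fin.tail v), Fin.cons_self_tail]

/-- The standard encoding of tuples of binary strings. -/
def tupleEncoding (k : ℕ) : Computability.Encoding (Fin k → List Bool) (Option Bool) where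
  encode := encTuple k
  decode := decTuple k
  decode_encode := decTuple_encTuple k

/-- A function on tuples of binary strings is polynomial time computable iff
some two-stack machine computes it in polynomial time (Mathlib's notion). -/
def PolyTimeStringFun {k : ℕ} (f : (Fin k → List Bool) → List Bool) : Prop :=
  Nonempty (Turing.TM2ComputableInPolyTime (tupleEncoding k).encode boolListEncoding.encode f)

/-- Polynomial time computability for functions on ℕ,
with respect to the standard binary encoding of naturals. -/
def PolyTimeNatFun (f : ℕ → ℕ) : Prop :=
  Nonempty (Turing.TM2ComputableInPolyTime Computability.encodingNatBool.encode
    Computability.encodingNatBool.encode f)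

/-! ## A feasible encoding of lists of naturals by naturals -/

/-- Reads a list of bits (least significant first) as a natural number. -/
def bitsToNat (l : List Bool) : ℕ := l.foldr (fun b n => Nat.bit b n) 0

/-- A standard feasible (linear size) encoding of lists of natural numbers:
every bit of the binary expansion of an entry is escaped as `[false, b]`,
entries are terminated by `[true, true]`, and a final `true` protects
leading zeros. -/
def encodeNatList (l : List ℕ) : ℕ :=
  bitsToNat
    ((l.map fun n => (Nat.bits n).foldr (fun b acc => false :: b :: acc) [true, true]).foldr
        (· ++ ·) [true])

/-! ## Rooted DAGs encoding hereditarily finite sets -/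

/-- A rooted DAG: a finite set `V` of natural numbers, edges `E ⊆ V × V`
going strictly downwards, and a root `r ∈ V` which is the only node of
indegree zero. -/
structure RootedDag where
  V : Finset ℕ
  E : Finset (ℕ × ℕ)
  r : ℕ
  edge_mem : ∀ e ∈ E, e.1 ∈ V ∧ e.2 ∈ V
  root_mem : r ∈ V
  root_indeg : ∀ e ∈ E, e.2 ≠ r
  reach_nonroot : ∀ a ∈ V, a ≠ r → ∃ b ∈ V, (b, a) ∈ E
  desc : ∀ e ∈ E, e.2 < e.1

namespace RootedDag

/-- The children of a node. -/
def children (G : RootedDag) (a : ℕ) : Finset ℕ :=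
  (G.E.filter fun e => e.1 = a).image Prod.snd

theorem children_lt (G : RootedDag) {a b : ℕ} (h : b ∈ G.children a) : b < a := by
  simp only [children, Finset.mem_image, Finset.mem_filter] at h
  obtain ⟨e, ⟨heE, he1⟩, he2⟩ := h
  have := G.desc e heE
  omega

/-- The hereditarily finite set encoded at a node:
`set_G(a) = {set_G(b) : (a,b) ∈ E}`. -/
def setAt (G : RootedDag) (a : ℕ) : ZFSet.{0} :=
  (((G.children a).attach.toList).map fun b => G.setAt b.1).foldr insert ∅
termination_by a
decreasing_by exact G.children_lt b.2

/-- The hereditarily finite set encoded by a rooted DAG. -/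
def set (G : RootedDag) : ZFSet.{0} := G.setAt G.r

/-- A DAG is fully collapsed iff distinct nodes encode distinct sets. -/
def FullyCollapsed (G : RootedDag) : Prop :=
  ∀ a ∈ G.V, ∀ b ∈ G.V, G.setAt a = G.setAt b → a = b

/-- Reachability along edges. -/
def Reaches (G : RootedDag) (a b : ℕ) : Prop :=
  Relation.ReflTransGen (fun u v => (u, v) ∈ G.E) a b

/-- The node set of the sub-DAG `G|a` of nodes reachable from `a`. -/
noncomputable def reachSet (G : RootedDag) (a : ℕ) : Finset ℕ :=
  G.V.filter fun b => G.Reaches a b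

/-- A DAG is balanced iff each node `a` is at most the number of nodes of `G|a`. -/
def Balanced (G : RootedDag) : Prop :=
  ∀ a ∈ G.V, a ≤ (G.reachSet a).card

end RootedDag

/-- The numeric code `⌈G⌉` of a rooted DAG: the code of the triple consisting
of (the code of) the sorted list of vertices, (the code of) the sorted list of
pair-coded edges, and the root. -/
noncomputable def RootedDag.code (G : RootedDag) : ℕ :=
  encodeNatList [encodeNatList (G.V.sort (· ≤ ·)),
    encodeNatList ((G.E.image fun e => Nat.pair e.1 e.2).sort (· ≤ ·)), G.r]

/-- The finite set `{l₀, …, l_{n-1}}` as a ZF-set. -/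
def zSetOfList (l : List ZFSet) : ZFSet := l.foldr insert ∅

/-- The class generated from `PCSF⁻` and projections by safe composition and
*predicative function recursion* `f(x,ȳ/ā) = h(x,ȳ/ā, f↾x)`, with
`f↾x = {⟨z, f(z,ȳ/ā)⟩ : z ∈ x}`. -/
inductive PCSFfun : ∀ n m : ℕ, ((Fin n → ZFSet) → (Fin m → ZFSet) → ZFSet) → Prop
  | ofMinus {m : ℕ} (h : (Fin m → ZFSet) → ZFSet) :
      PCSFminus m h → PCSFfun 0 m fun _ a => h a
  | proj {n m : ℕ} (j : Fin (n + m)) : PCSFfun n m fun x a => Fin.append x a j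
  | comp {n m k l : ℕ} (h : (Fin k → ZFSet) → (Fin l → ZFSet) → ZFSet)
      (r : Fin k → (Fin n → ZFSet) → (Fin 0 → ZFSet) → ZFSet)
      (t : Fin l → (Fin n → ZFSet) → (Fin m → ZFSet) → ZFSet) :
      PCSFfun k l h → (∀ i, PCSFfun n 0 (r i)) → (∀ i, PCSFfun n m (t i)) →
      PCSFfun n m fun x a => h (fun i => r i x Fin.elim0) fun i => t i x a
  | frecur {n m : ℕ} (h : (Fin (n + 1) → ZFSet) → (Fin (m + 1) → ZFSet) → ZFSet)
      (f : (Fin (n + 1) → ZFSet) → (Fin m → ZFSet) → ZFSet) :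
      PCSFfun (n + 1) (m + 1) h →
      (∀ (x : ZFSet) (y : Fin n → ZFSet) (a : Fin m → ZFSet),
        f (Fin.cons x y) a =
          h (Fin.cons x y)
            (Fin.snoc a (zImage (fun z => kpair z (f (Fin.cons z y) a)) x))) →
      PCSFfun (n + 1) m f

/-!
Both directions pass between a function and its graph. If `f` arises by function recursion from
`h`, then `x ↦ ⟨x, f(x,ȳ/ā)⟩` arises by set recursion (its set of previous values is exactly
`f↾x`), and `f` is its second component. Conversely, set recursion from `h` is function recursion
from `h` applied to the range of `f↾x`. The second component and the range of Kuratowski pairs are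
`PCSF⁻`: equality `x = y` is the membership `x ∈ {y}`, so conditions built from `∈`, `=`, `∨` and
bounded `∃` are decided by the conditional and safe separation.
-/

theorem mem_zImage {f : ZFSet → ZFSet} {x y : ZFSet} : y ∈ zImage f x ↔ ∃ z ∈ x, f z = y :=
  @ZFSet.mem_image f (Classical.allZFSetDefinable _) x y

theorem ne_empty_iff_exists_mem (x : ZFSet) : x ≠ ∅ ↔ ∃ y, y ∈ x := by
  simp [ZFSet.eq_empty]

theorem sUnion_kpair (c d : ZFSet) : ZFSet.sUnion (kpair c d) = {c, d} := by
  ext u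
  simp [kpair]

/-- For `p = ⟨c, d⟩` the condition selects `d` from `⋃p = {c, d}`: `{u} ∉ p` when `c ≠ d`,
and `⋃p = {u}` when `c = d`. -/
def kpairSnd (p : ZFSet) : ZFSet :=
  ZFSet.sUnion (ZFSet.sep (fun u => ZFSet.sUnion p = {u} ∨ {u} ∉ p) (ZFSet.sUnion p))

theorem kpairSnd_kpair (c d : ZFSet) : kpairSnd (kpair c d) = d := by
  suffices ZFSet.sep (fun u => ZFSet.sUnion (kpair c d) = {u} ∨ {u} ∉ kpair c d)
      (ZFSet.sUnion (kpair c d)) = {d} by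
    rw [kpairSnd, this, ZFSet.sUnion_singleton]
  ext u
  rw [ZFSet.mem_sep, sUnion_kpair, ZFSet.mem_singleton, ZFSet.pair_eq_singleton_iff]
  constructor
  · rintro ⟨hu, hc | hc⟩
    · exact hc.2.symm
    · rcases ZFSet.mem_pair.1 hu with rfl | rfl
      · exact absurd (by simp [kpair]) hc
      · rfl
  · rintro rfl
    refine ⟨by simp, ?_⟩
    by_cases hcu : c = u
    · exact .inl ⟨hcu, rfl⟩
    · refine .inr fun h => ?_
      simp [kpair, ZFSet.singleton_inj, Ne.symm hcu] at h

def kpairRange (P : ZFSet) : ZFSet :=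
  ZFSet.sep (fun d => ∃ p ∈ P, d = kpairSnd p) (ZFSet.sUnion (ZFSet.sUnion P))

theorem kpairRange_zImage (F : ZFSet → ZFSet) (x : ZFSet) :
    kpairRange (zImage (fun z => kpair z (F z)) x) = zImage F x := by
  ext d
  simp only [kpairRange, ZFSet.mem_sep, mem_zImage]
  constructor
  · rintro ⟨-, -, ⟨z, hz, rfl⟩, rfl⟩
    exact ⟨z, hz, (kpairSnd_kpair z (F z)).symm⟩
  · rintro ⟨z, hz, rfl⟩
    have hpair : kpair z (F z) ∈ zImage (fun z => kpair z (F z)) x := mem_zImage.2 ⟨z, hz, rfl⟩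
    refine ⟨?_, _, ⟨z, hz, rfl⟩, (kpairSnd_kpair z (F z)).symm⟩
    have hsnd : F z ∈ ({z, F z} : ZFSet) := by simp
    exact ZFSet.mem_sUnion_of_mem hsnd (ZFSet.mem_sUnion_of_mem (by simp [kpair]) hpair)

namespace PCSFminus

variable {m : ℕ}

theorem const_empty : PCSFminus m fun _ => ∅ :=
  comp _ Fin.elim0 null fun i => i.elim0

theorem insert_singleton {g₁ g₂ : (Fin m → ZFSet) → ZFSet} (h₁ : PCSFminus m g₁)
    (h₂ : PCSFminus m g₂) : PCSFminus m fun a => {g₁ a, g₂ a} :=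
  comp _ ![g₁, g₂] pair (Fin.forall_fin_two.2 ⟨h₁, h₂⟩)

theorem singleton {g : (Fin m → ZFSet) → ZFSet} (h : PCSFminus m g) :
    PCSFminus m fun a => {g a} := by
  simpa only [ZFSet.pair_eq_singleton] using insert_singleton h h

theorem sUnion {g : (Fin m → ZFSet) → ZFSet} (h : PCSFminus m g) :
    PCSFminus m fun a => ZFSet.sUnion (g a) :=
  comp _ ![g] union (Fin.forall_fin_one.2 h)

theorem ite_mem {g₁ g₂ g₃ g₄ : (Fin m → ZFSet) → ZFSet} (h₁ : PCSFminus m g₁)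
    (h₂ : PCSFminus m g₂) (h₃ : PCSFminus m g₃) (h₄ : PCSFminus m g₄) :
    PCSFminus m fun a => if g₃ a ∈ g₄ a then g₁ a else g₂ a :=
  comp _ ![g₁, g₂, g₃, g₄] cond (by simp [Fin.forall_fin_succ, *])

end PCSFminus

/-- Deciding by nonemptiness rather than by a `0`/`1` value as in `PCSFRel` makes `∨` a union
and bounded `∃` a separation. -/
def PCSFminusRel (m : ℕ) (R : (Fin m → ZFSet) → Prop) : Prop :=
  ∃ χ, PCSFminus m χ ∧ ∀ a, χ a ≠ ∅ ↔ R a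

namespace PCSFminusRel

variable {m : ℕ} {g₁ g₂ : (Fin m → ZFSet) → ZFSet}

theorem of_iff {R S : (Fin m → ZFSet) → Prop} (h : PCSFminusRel m R) (e : ∀ a, R a ↔ S a) :
    PCSFminusRel m S :=
  let ⟨χ, hχ, hR⟩ := h
  ⟨χ, hχ, fun a => (hR a).trans (e a)⟩

theorem mem (h₁ : PCSFminus m g₁) (h₂ : PCSFminus m g₂) :
    PCSFminusRel m fun a => g₁ a ∈ g₂ a :=
  ⟨_, .ite_mem (.singleton .const_empty) .const_empty h₁ h₂, fun a => by
    split_ifs with h <;> simp [h, ne_empty_iff_exists_mem]⟩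

theorem notMem (h₁ : PCSFminus m g₁) (h₂ : PCSFminus m g₂) :
    PCSFminusRel m fun a => g₁ a ∉ g₂ a :=
  ⟨_, .ite_mem .const_empty (.singleton .const_empty) h₁ h₂, fun a => by
    split_ifs with h <;> simp [h, ne_empty_iff_exists_mem]⟩

theorem eq (h₁ : PCSFminus m g₁) (h₂ : PCSFminus m g₂) :
    PCSFminusRel m fun a => g₁ a = g₂ a :=
  (mem h₁ h₂.singleton).of_iff fun _ => ZFSet.mem_singleton

theorem or {R S : (Fin m → ZFSet) → Prop} (hR : PCSFminusRel m R) (hS : PCSFminusRel m S) :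
    PCSFminusRel m fun a => R a ∨ S a := by
  obtain ⟨χ, hχ, hχR⟩ := hR
  obtain ⟨ψ, hψ, hψS⟩ := hS
  refine ⟨_, (hχ.insert_singleton hψ).sUnion, fun a => ?_⟩
  simp only [← hχR, ← hψS, ne_empty_iff_exists_mem, ZFSet.mem_sUnion, ZFSet.mem_pair]
  grind

end PCSFminusRel

theorem PCSFminus.sep_of_rel {m : ℕ} {g : (Fin m → ZFSet) → ZFSet} (hg : PCSFminus m g)
    {R : (Fin (m + 1) → ZFSet) → Prop} (hR : PCSFminusRel (m + 1) R) :
    PCSFminus m fun a => ZFSet.sep (fun b => R (Fin.snoc a b)) (g a) := by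
  obtain ⟨χ, hχ, hχR⟩ := hR
  have ht : ∀ i, PCSFminus m fun a => (Fin.snoc a (g a) : Fin (m + 1) → ZFSet) i := by
    refine Fin.lastCases ?_ fun j => ?_
    · simpa using hg
    · simpa using proj j
  simpa [hχR] using comp _ _ (sep χ hχ) ht

theorem PCSFminusRel.exists_mem {m : ℕ} {g : (Fin m → ZFSet) → ZFSet} (hg : PCSFminus m g)
    {R : (Fin (m + 1) → ZFSet) → Prop} (hR : PCSFminusRel (m + 1) R) :
    PCSFminusRel m fun a => ∃ b ∈ g a, R (Fin.snoc a b) :=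
  ⟨_, hg.sep_of_rel hR, fun a => by simp [ne_empty_iff_exists_mem]⟩

theorem PCSFminus.kpairSnd : PCSFminus 1 fun a => kpairSnd (a 0) :=
  ((proj 0).sUnion.sep_of_rel
    ((PCSFminusRel.eq (proj 0).sUnion (proj 1).singleton).or
      (PCSFminusRel.notMem (proj 1).singleton (proj 0)))).sUnion

theorem PCSFminus.kpairRange : PCSFminus 1 fun a => kpairRange (a 0) :=
  (proj 0).sUnion.sUnion.sep_of_rel
    (PCSFminusRel.exists_mem (proj 0)
      (PCSFminusRel.eq (proj 1) (comp _ ![fun a => a 2] kpairSnd (by simpa using proj 2))))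

theorem PCSFminus.kpair : PCSFminus 2 fun b => kpair (b 0) (b 1) :=
  (proj 0).singleton.insert_singleton ((proj 0).insert_singleton (proj 1))

namespace PCSF

variable {n m : ℕ}

theorem projN (j : Fin n) : PCSF n m fun x _ => x j := by
  simpa using proj (m := m) (Fin.castAdd m j)

theorem comp_minus {k : ℕ} {u : (Fin k → ZFSet) → ZFSet} (hu : PCSFminus k u)
    {t : Fin k → (Fin n → ZFSet) → (Fin m → ZFSet) → ZFSet} (ht : ∀ i, PCSF n m (t i)) :
    PCSF n m fun x a => u fun i => t i x a :=
  comp _ Fin.elim0 t (ofMinus u hu) (fun i => i.elim0) ht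

theorem of_function_recursion {h : (Fin (n + 1) → ZFSet) → (Fin (m + 1) → ZFSet) → ZFSet}
    {f : (Fin (n + 1) → ZFSet) → (Fin m → ZFSet) → ZFSet} (hh : PCSF (n + 1) (m + 1) h)
    (hf : ∀ x y a, f (Fin.cons x y) a =
      h (Fin.cons x y) (Fin.snoc a (zImage (fun z => kpair z (f (Fin.cons z y) a)) x))) :
    PCSF (n + 1) m f := by
  have hgraph : PCSF (n + 1) m fun x a => kpair (x 0) (f x a) :=
    recur _ _ (comp_minus PCSFminus.kpair (t := ![fun x _ => x 0, h])
      (Fin.forall_fin_two.2 ⟨projN 0, hh⟩))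
      fun x y a => by simp [hf x y a]
  simpa only [Matrix.cons_val_fin_one, kpairSnd_kpair] using
    comp_minus PCSFminus.kpairSnd (t := ![fun x a => kpair (x 0) (f x a)])
      (Fin.forall_fin_one.2 hgraph)

end PCSF

namespace PCSFfun

variable {n m : ℕ}

theorem projN (j : Fin n) : PCSFfun n m fun x _ => x j := by
  simpa using proj (m := m) (Fin.castAdd m j)

theorem projS (i : Fin m) : PCSFfun n m fun _ a => a i := by
  simpa using proj (n := n) (Fin.natAdd n i)

theorem comp_minus {k : ℕ} {u : (Fin k → ZFSet) → ZFSet} (hu : PCSFminus k u)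
    {t : Fin k → (Fin n → ZFSet) → (Fin m → ZFSet) → ZFSet} (ht : ∀ i, PCSFfun n m (t i)) :
    PCSFfun n m fun x a => u fun i => t i x a :=
  comp _ Fin.elim0 t (ofMinus u hu) (fun i => i.elim0) ht

theorem comp_safe {l : ℕ} {h : (Fin n → ZFSet) → (Fin l → ZFSet) → ZFSet} (hh : PCSFfun n l h)
    {t : Fin l → (Fin n → ZFSet) → (Fin m → ZFSet) → ZFSet} (ht : ∀ i, PCSFfun n m (t i)) :
    PCSFfun n m fun x a => h x fun i => t i x a :=
  comp h (fun j x _ => x j) t hh projN ht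

theorem of_set_recursion {h : (Fin (n + 1) → ZFSet) → (Fin (m + 1) → ZFSet) → ZFSet}
    {f : (Fin (n + 1) → ZFSet) → (Fin m → ZFSet) → ZFSet} (hh : PCSFfun (n + 1) (m + 1) h)
    (hf : ∀ x y a, f (Fin.cons x y) a =
      h (Fin.cons x y) (Fin.snoc a (zImage (fun z => f (Fin.cons z y) a) x))) :
    PCSFfun (n + 1) m f := by
  have ht : ∀ i, PCSFfun (n + 1) (m + 1) fun _ b =>
      (Fin.snoc (Fin.init b) (kpairRange (b (Fin.last m))) : Fin (m + 1) → ZFSet) i := by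
    refine Fin.lastCases ?_ fun j => ?_
    · simpa using comp_minus PCSFminus.kpairRange (t := ![fun _ b => b (Fin.last m)])
        (Fin.forall_fin_one.2 (projS (Fin.last m)))
    · simpa [Fin.init] using projS (n := n + 1) j.castSucc
  exact frecur _ f (comp_safe hh ht) fun x y a => by simp [kpairRange_zImage, hf x y a]

end PCSFfun

theorem PCSF.toPCSFfun {n m : ℕ} {f : (Fin n → ZFSet) → (Fin m → ZFSet) → ZFSet}
    (hf : PCSF n m f) : PCSFfun n m f := by
  induction hf with
  | ofMinus h hh => exact .ofMinus h hh
  | proj j => exact .proj j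
  | comp h r t _ _ _ ihh ihr iht => exact .comp h r t ihh ihr iht
  | recur h f _ hf ihh => exact .of_set_recursion ihh hf

/-- `PCSF` is closed under predicative function recursion
`f(x,ȳ/ā) = h(x,ȳ/ā, f↾x)`; conversely, every `PCSF` function is generated
from `PCSF⁻` and projections by safe composition and predicative function
recursion. -/
theorem pcsf_function_recursion :
    (∀ (n m : ℕ) (h : (Fin (n + 1) → ZFSet) → (Fin (m + 1) → ZFSet) → ZFSet)
        (f : (Fin (n + 1) → ZFSet) → (Fin m → ZFSet) → ZFSet),
      PCSF (n + 1) (m + 1) h →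
      (∀ (x : ZFSet) (y : Fin n → ZFSet) (a : Fin m → ZFSet),
        f (Fin.cons x y) a =
          h (Fin.cons x y)
            (Fin.snoc a (zImage (fun z => kpair z (f (Fin.cons z y) a)) x))) →
      PCSF (n + 1) m f) ∧
    (∀ (n m : ℕ) (f : (Fin n → ZFSet) → (Fin m → ZFSet) → ZFSet),
      PCSF n m f → PCSFfun n m f) :=
  ⟨fun _ _ _ _ => PCSF.of_function_recursion, fun _ _ _ => PCSF.toPCSFfun⟩

end PCSFPaper
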